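/- arXiv:math/0307026 — 3 statements merged into one kernel-verified Lean document; each statement's English description precedes it below -/
import Mathlib

section
/- The rational Ruijsenaars–Schneider structure matrix A(λ) = 1 + Σ_{i≠j} (γ/λ_{ij}) (E_ii − E_ij) ⊗ (E_jj − E_ji), with λ_{ij} = λ_i − λ_j, satisfies the non-dynamical Yang–Baxter equation A_{12} A_{13} A_{23} = A_{23} A_{13} A_{12} on V ⊗ V ⊗ V. -/
open Matrix Kronecker MvPolynomial

noncomputable section

/-- The field of rational functions in the variables `λ₁,…,λₙ`, `γ` and `γ̃`. -/
abbrev KK (n : ℕ) : Type := FractionRing (MvPolynomial (Fin n ⊕ Bool) ℂ)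

variable {n : ℕ}

/-- The generic point `λ`. -/
def lamG (n : ℕ) : Fin n → KK n :=
  fun i => algebraMap (MvPolynomial (Fin n ⊕ Bool) ℂ) (KK n) (X (Sum.inl i))

/-- The parameter `γ`. -/
def gamG (n : ℕ) : KK n :=
  algebraMap (MvPolynomial (Fin n ⊕ Bool) ℂ) (KK n) (X (Sum.inr true))

/-- The parameter `γ̃`. -/
def gamT (n : ℕ) : KK n :=
  algebraMap (MvPolynomial (Fin n ⊕ Bool) ℂ) (KK n) (X (Sum.inr false))

/-- Elementary matrices `E i j`. -/
def EM (i j : Fin n) : Matrix (Fin n) (Fin n) (KK n) := Matrix.single i j 1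

/-- `A(λ) = 1 + Σ_{i≠j} (γ/λ_{ij}) (E_ii − E_ij) ⊗ (E_jj − E_ji)`. -/
def matA (l : Fin n → KK n) : Matrix (Fin n × Fin n) (Fin n × Fin n) (KK n) :=
  1 + ∑ i, ∑ j, if i ≠ j then
    (gamG n / (l i - l j)) • ((EM i i - EM i j) ⊗ₖ (EM j j - EM j i)) else 0

/-- `B(λ) = 1 + Σ_{i≠j} (γ/(λ_{ij}−γ)) E_jj ⊗ (E_ii − E_ij)`. -/
def matB (l : Fin n → KK n) : Matrix (Fin n × Fin n) (Fin n × Fin n) (KK n) :=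
  1 + ∑ i, ∑ j, if i ≠ j then
    (gamG n / (l i - l j - gamG n)) • (EM j j ⊗ₖ (EM i i - EM i j)) else 0

/-- conjugation by the flip `π` of the two tensor factors. -/
def flipM {α : Type} (M : Matrix (Fin n × Fin n) (Fin n × Fin n) α) :
    Matrix (Fin n × Fin n) (Fin n × Fin n) α :=
  Matrix.of fun p q => M p.swap q.swap

/-- `C = B^π`. -/
def matC (l : Fin n → KK n) : Matrix (Fin n × Fin n) (Fin n × Fin n) (KK n) :=
  flipM (matB l)

/-- `D(λ) = 1 − Σ_{i≠j} (γ/λ_{ij}) E_ii ⊗ E_jj + Σ_{i≠j} (γ/λ_{ij}) E_ij ⊗ E_ji`. -/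
def matD (l : Fin n → KK n) : Matrix (Fin n × Fin n) (Fin n × Fin n) (KK n) :=
  1 - (∑ i, ∑ j, if i ≠ j then (gamG n / (l i - l j)) • (EM i i ⊗ₖ EM j j) else 0)
    + ∑ i, ∑ j, if i ≠ j then (gamG n / (l i - l j)) • (EM i j ⊗ₖ EM j i) else 0

/-- the shift `λ ↦ λ + γ e_k`. -/
def lsh {S : Type} [AddMonoid S] (g : S) (l : Fin n → S) (k : Fin n) : Fin n → S :=
  fun m => l m + if m = k then g else 0

/-- `M_{12}` on `V⊗V⊗V`. -/
def op12 {α : Type} [Zero α] (M : Matrix (Fin n × Fin n) (Fin n × Fin n) α) :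
    Matrix (Fin n × Fin n × Fin n) (Fin n × Fin n × Fin n) α :=
  Matrix.of fun p q => if p.2.2 = q.2.2 then M (p.1, p.2.1) (q.1, q.2.1) else 0

/-- `M_{13}` on `V⊗V⊗V`. -/
def op13 {α : Type} [Zero α] (M : Matrix (Fin n × Fin n) (Fin n × Fin n) α) :
    Matrix (Fin n × Fin n × Fin n) (Fin n × Fin n × Fin n) α :=
  Matrix.of fun p q => if p.2.1 = q.2.1 then M (p.1, p.2.2) (q.1, q.2.2) else 0

/-- `M_{23}` on `V⊗V⊗V`. -/
def op23 {α : Type} [Zero α] (M : Matrix (Fin n × Fin n) (Fin n × Fin n) α) :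
    Matrix (Fin n × Fin n × Fin n) (Fin n × Fin n × Fin n) α :=
  Matrix.of fun p q => if p.1 = q.1 then M (p.2.1, p.2.2) (q.2.1, q.2.2) else 0

/-- `M_{12}(λ+γh₃)` on `V⊗V⊗V`. -/
def op12sh3 {S α : Type} [AddMonoid S] [Zero α] (g : S)
    (F : (Fin n → S) → Matrix (Fin n × Fin n) (Fin n × Fin n) α) (l : Fin n → S) :
    Matrix (Fin n × Fin n × Fin n) (Fin n × Fin n × Fin n) α :=
  Matrix.of fun p q => if p.2.2 = q.2.2 then F (lsh g l q.2.2) (p.1, p.2.1) (q.1, q.2.1) else 0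

/-- `M_{13}(λ+γh₂)` on `V⊗V⊗V`. -/
def op13sh2 {S α : Type} [AddMonoid S] [Zero α] (g : S)
    (F : (Fin n → S) → Matrix (Fin n × Fin n) (Fin n × Fin n) α) (l : Fin n → S) :
    Matrix (Fin n × Fin n × Fin n) (Fin n × Fin n × Fin n) α :=
  Matrix.of fun p q => if p.2.1 = q.2.1 then F (lsh g l q.2.1) (p.1, p.2.2) (q.1, q.2.2) else 0

/-- `M_{23}(λ+γh₁)` on `V⊗V⊗V`. -/
def op23sh1 {S α : Type} [AddMonoid S] [Zero α] (g : S)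
    (F : (Fin n → S) → Matrix (Fin n × Fin n) (Fin n × Fin n) α) (l : Fin n → S) :
    Matrix (Fin n × Fin n × Fin n) (Fin n × Fin n × Fin n) α :=
  Matrix.of fun p q => if p.1 = q.1 then F (lsh g l q.1) (p.2.1, p.2.2) (q.2.1, q.2.2) else 0

/- `A` acts on `f : V ⊗ V` by `f (a, b) ↦ f (a, b) + u_ab (f (a, b) - f (a, a) - f (b, b) + f (b, a))`
with `u_ab = γ / (λ_a - λ_b)`, so both sides of the Yang–Baxter equation, applied to a vector `φ`
and evaluated at `(a, b, c)`, only involve `u_ab`, `u_ac`, `u_bc`. For distinct `a, b, c` the two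
sides agree because of `u_ab u_bc = u_ac (u_ab + u_bc)`; for coincident indices `u_aa = 0` and
`u_ba = -u_ab` suffice. -/

section TensorLegs

variable {α : Type} [NonUnitalNonAssocSemiring α]
  (M : Matrix (Fin n × Fin n) (Fin n × Fin n) α) (φ : Fin n × Fin n × Fin n → α) (a b c : Fin n)

lemma op12_mulVec : (op12 M *ᵥ φ) (a, b, c) = (M *ᵥ fun k => φ (k.1, k.2, c)) (a, b) := by
  simp [mulVec, dotProduct, op12, Fintype.sum_prod_type]

lemma op13_mulVec : (op13 M *ᵥ φ) (a, b, c) = (M *ᵥ fun k => φ (k.1, b, k.2)) (a, c) := by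
  simp [mulVec, dotProduct, op13, Fintype.sum_prod_type]

lemma op23_mulVec : (op23 M *ᵥ φ) (a, b, c) = (M *ᵥ fun k => φ (a, k.1, k.2)) (b, c) := by
  simp [mulVec, dotProduct, op23, Fintype.sum_prod_type]

end TensorLegs

lemma matA_apply (l : Fin n → KK n) (a b c d : Fin n) :
    matA l (a, b) (c, d) = (1 : Matrix (Fin n × Fin n) (Fin n × Fin n) (KK n)) (a, b) (c, d) +
      gamG n / (l a - l b) *
        (((if a = c then 1 else 0) - if b = c then 1 else 0) *
          ((if b = d then 1 else 0) - if a = d then 1 else 0)) := by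
  rw [matA, Matrix.add_apply, Matrix.sum_apply, Finset.sum_eq_single a, Matrix.sum_apply,
    Finset.sum_eq_single b]
  · by_cases hab : a = b
    · subst hab; simp
    · simp [hab, EM, single_apply]
  · intro j _ hj
    split_ifs <;> simp [EM, single_apply, hj]
  · simp
  · intro i _ hi
    rw [Matrix.sum_apply]
    refine Finset.sum_eq_zero fun j _ => ?_
    split_ifs <;> simp [EM, single_apply, hi]
  · simp

lemma matA_mulVec (l : Fin n → KK n) (f : Fin n × Fin n → KK n) (a b : Fin n) :
    (matA l *ᵥ f) (a, b) =
      f (a, b) + gamG n / (l a - l b) * (f (a, b) - f (a, a) - f (b, b) + f (b, a)) := by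
  simp only [mulVec, dotProduct, Fintype.sum_prod_type, matA_apply]
  simp only [one_apply, Prod.ext_iff, ite_and, mul_sub, mul_ite, mul_one, mul_zero, add_mul,
    ite_mul, one_mul, zero_mul, sub_mul, Finset.sum_add_distrib, Finset.sum_ite_irrel,
    Finset.sum_ite_eq, Finset.mem_univ, ↓reduceIte, Finset.sum_const_zero, Finset.sum_sub_distrib,
    add_right_inj]
  ring

lemma matA_yangBaxter {l : Fin n → KK n} (hl : Function.Injective l) :
    op12 (matA l) * op13 (matA l) * op23 (matA l) =
      op23 (matA l) * op13 (matA l) * op12 (matA l) := by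
  refine ext_iff_mulVec.mpr fun φ => funext fun ⟨a, b, c⟩ => ?_
  simp only [← mulVec_mulVec, op12_mulVec, op13_mulVec, op23_mulVec, matA_mulVec]
  have hl' : ∀ {i j}, i ≠ j → l i - l j ≠ 0 := fun h => sub_ne_zero.mpr (hl.ne h)
  have anti : ∀ i j, gamG n / (l j - l i) = -(gamG n / (l i - l j)) := fun i j => by
    rw [← div_neg, neg_sub]
  -- coincident indices: here `u_aa = γ / (l a - l a) = γ / 0 = 0`
  rcases eq_or_ne a b with rfl | hab
  · simp only [sub_self, div_zero, anti a c]; ring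
  rcases eq_or_ne b c with rfl | hbc
  · simp only [sub_self, div_zero, anti a b]; ring
  rcases eq_or_ne a c with rfl | hac
  · simp only [sub_self, div_zero, anti a b]; ring
  simp only [anti a b, anti b c]
  have hxy := hl' hab
  have hyz := hl' hbc
  have hxz := hl' hac
  generalize l a = x, l b = y, l c = z at *
  generalize gamG n = γ
  field_simp
  ring

lemma lamG_injective (n : ℕ) : Function.Injective (lamG n) :=
  (IsFractionRing.injective _ (KK n)).comp (X_injective.comp Sum.inl_injective)

/-- the rational RS matrix `A` satisfies the non-dynamical
Yang–Baxter equation `A₁₂ A₁₃ A₂₃ = A₂₃ A₁₃ A₁₂` on `V ⊗ V ⊗ V`,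
as an identity of matrices with rational-function entries (i.e. at the
generic point `λ = lamG n`). -/
theorem statement0 (n : ℕ) :
    op12 (matA (lamG n)) * op13 (matA (lamG n)) * op23 (matA (lamG n)) =
      op23 (matA (lamG n)) * op13 (matA (lamG n)) * op12 (matA (lamG n)) :=
  matA_yangBaxter (lamG_injective n)
end
end

section
/- The matrix A(λ) = 1 + Σ_{i≠j} (γ/λ_{ij}) (E_ii − E_ij) ⊗ (E_jj − E_ji) satisfies the unitarity condition A_{21}(λ) = A_{12}(λ)^{-1}, where A_{21} = π A_{12} π with π the flip operator on V⊗V. -/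
open Matrix Kronecker MvPolynomial

noncomputable section

variable {n : ℕ}

/-! Write `K i j = (E_ii − E_ij) ⊗ (E_jj − E_ji)`, so that `A = 1 + S` with
`S = Σ_{i ≠ j} x_ij K i j` and antisymmetric coefficients `x_ij = γ / λ_ij`. For `i ≠ j`, `k ≠ m`
the product `K i j * K k m` vanishes unless `{k, m} = {i, j}`, and
`K i j * K i j = K i j * K j i = K i j`; hence `K i j * S = (x_ij + x_ji) K i j = 0` and `S² = 0`.
The flip exchanges the tensor factors, sending `K i j` to `K j i` and therefore `S` to `-S`.
So `A₁₂ A₂₁ = (1 + S)(1 - S) = 1 - S² = 1`. -/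

section SingleDiff

variable {ι R : Type*} [CommRing R] [DecidableEq ι]

def singleDiff (i j : ι) : Matrix ι ι R := single i i 1 - single i j 1

lemma singleDiff_self (i : ι) : singleDiff (R := R) i i = 0 := sub_self _

variable [Fintype ι]

lemma reindexAlgEquiv_prodComm_kronecker (A B : Matrix ι ι R) :
    reindexAlgEquiv R R (Equiv.prodComm ι ι) (A ⊗ₖ B) = B ⊗ₖ A := by
  ext; simp [mul_comm]

lemma singleDiff_mul_singleDiff_self (i j : ι) :
    singleDiff (R := R) i j * singleDiff i j = singleDiff i j := by
  obtain rfl | hij := eq_or_ne i j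
  · rw [singleDiff_self, mul_zero]
  · simp [singleDiff, sub_mul, mul_sub, hij.symm]

lemma singleDiff_mul_singleDiff_swap (i j : ι) :
    singleDiff (R := R) i j * singleDiff j i = singleDiff i j := by
  obtain rfl | hij := eq_or_ne i j
  · rw [singleDiff_self, mul_zero]
  · simp [singleDiff, sub_mul, mul_sub, hij, neg_add_eq_sub]

lemma singleDiff_mul_singleDiff_of_ne {i j k : ι} (hki : k ≠ i) (hkj : k ≠ j) (m : ι) :
    singleDiff (R := R) i j * singleDiff k m = 0 := by
  simp [singleDiff, sub_mul, mul_sub, hki.symm, hkj.symm]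

def kronSingleDiff (i j : ι) : Matrix (ι × ι) (ι × ι) R := singleDiff i j ⊗ₖ singleDiff j i

lemma kronSingleDiff_mul_kronSingleDiff_self (i j : ι) :
    kronSingleDiff (R := R) i j * kronSingleDiff i j = kronSingleDiff i j := by
  rw [kronSingleDiff, ← mul_kronecker_mul, singleDiff_mul_singleDiff_self,
    singleDiff_mul_singleDiff_self]

lemma kronSingleDiff_mul_kronSingleDiff_swap (i j : ι) :
    kronSingleDiff (R := R) i j * kronSingleDiff j i = kronSingleDiff i j := by
  rw [kronSingleDiff, kronSingleDiff, ← mul_kronecker_mul, singleDiff_mul_singleDiff_swap,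
    singleDiff_mul_singleDiff_swap]

lemma kronSingleDiff_mul_kronSingleDiff_of_ne {i j k m : ι} (hkm : k ≠ m)
    (h : (k, m) ≠ (i, j)) (h' : (k, m) ≠ (j, i)) :
    kronSingleDiff (R := R) i j * kronSingleDiff k m = 0 := by
  rw [kronSingleDiff, kronSingleDiff, ← mul_kronecker_mul]
  by_cases hki : k = i
  · subst hki
    have hmj : m ≠ j := fun hmj => h (by rw [hmj])
    rw [singleDiff_mul_singleDiff_of_ne hmj hkm.symm, kronecker_zero]
  by_cases hkj : k = j
  · subst hkj
    have hmi : m ≠ i := fun hmi => h' (by rw [hmi])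
    rw [singleDiff_mul_singleDiff_of_ne hkm.symm hmi, kronecker_zero]
  rw [singleDiff_mul_singleDiff_of_ne hki hkj, zero_kronecker]

def offDiagSum (x : ι → ι → R) : Matrix (ι × ι) (ι × ι) R :=
  ∑ i, ∑ j, if i ≠ j then x i j • kronSingleDiff i j else 0

lemma kronSingleDiff_mul_offDiagSum (x : ι → ι → R) {i j : ι} (hij : i ≠ j) :
    kronSingleDiff i j * offDiagSum x = (x i j + x j i) • kronSingleDiff i j := by
  rw [offDiagSum, ← Fintype.sum_prod_type', Finset.mul_sum,
    Fintype.sum_eq_add (i, j) (j, i) (by simp [hij])]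
  · simp [hij, hij.symm, kronSingleDiff_mul_kronSingleDiff_self,
      kronSingleDiff_mul_kronSingleDiff_swap, add_smul]
  · rintro ⟨k, m⟩ ⟨h, h'⟩
    split_ifs with hkm
    · rw [mul_smul_comm, kronSingleDiff_mul_kronSingleDiff_of_ne hkm h h', smul_zero]
    · rw [mul_zero]

variable {x : ι → ι → R}

lemma offDiagSum_mul_self (hx : ∀ i j, x j i = -x i j) :
    offDiagSum x * offDiagSum x = 0 := by
  rw [offDiagSum, Finset.sum_mul]
  refine Finset.sum_eq_zero fun i _ => ?_
  rw [Finset.sum_mul]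
  refine Finset.sum_eq_zero fun j _ => ?_
  split_ifs with hij
  · rw [smul_mul_assoc, ← offDiagSum, kronSingleDiff_mul_offDiagSum x hij, hx i j, add_neg_cancel,
      zero_smul, smul_zero]
  · rw [zero_mul]

lemma reindexAlgEquiv_prodComm_offDiagSum (hx : ∀ i j, x j i = -x i j) :
    reindexAlgEquiv R R (Equiv.prodComm ι ι) (offDiagSum x) = -offDiagSum x := by
  simp only [offDiagSum, map_sum, apply_ite, map_smul, map_zero]
  rw [Finset.sum_comm, ← Finset.sum_neg_distrib]
  refine Finset.sum_congr rfl fun j _ => ?_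
  rw [← Finset.sum_neg_distrib]
  refine Finset.sum_congr rfl fun i _ => ?_
  split_ifs with hij hji hji
  · rw [kronSingleDiff, kronSingleDiff, reindexAlgEquiv_prodComm_kronecker, hx, neg_smul]
  · exact absurd hij.symm hji
  · exact absurd hji.symm hij
  · rw [neg_zero]

theorem one_add_offDiagSum_mul_reindex_prodComm (hx : ∀ i j, x j i = -x i j) :
    (1 + offDiagSum x) * reindexAlgEquiv R R (Equiv.prodComm ι ι) (1 + offDiagSum x) = 1 := by
  rw [map_add, map_one, reindexAlgEquiv_prodComm_offDiagSum hx, ← sub_eq_add_neg,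
    ← (Commute.one_left _).mul_self_sub_mul_self_eq, offDiagSum_mul_self hx, mul_one, sub_zero]

end SingleDiff

/-- the rational RS matrix `A` satisfies the unitarity condition
`A₂₁(λ) = A₁₂(λ)⁻¹`, where `A₂₁ = π A₁₂ π`. -/
theorem statement4 (n : ℕ) :
    flipM (matA (lamG n)) = (matA (lamG n))⁻¹ := by
  have hx : ∀ i j, gamG n / (lamG n j - lamG n i) = -(gamG n / (lamG n i - lamG n j)) :=
    fun i j => by rw [← neg_sub]; exact div_neg (gamG n)
  have hA : matA (lamG n) = 1 + offDiagSum fun i j => gamG n / (lamG n i - lamG n j) := rfl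
  have hflip : flipM (matA (lamG n)) =
      reindexAlgEquiv (KK n) (KK n) (Equiv.prodComm _ _) (matA (lamG n)) := rfl
  rw [hflip, eq_comm, hA]
  exact inv_eq_right_inv (one_add_offDiagSum_mul_reindex_prodComm hx)
end
end

section
/- If matrices B(λ) and D(λ) satisfy D_{12}(λ) B_{13}(λ) B_{23}(λ+γh_1) = B_{23}(λ) B_{13}(λ+γh_2) D_{12}(λ) and D satisfies the dynamical YB equation D_{12}(λ+γh_3) D_{13}(λ) D_{23}(λ+γh_1) = D_{23}(λ) D_{13}(λ+γh_2) D_{12}(λ), together with [h⊗1, B]=0 and [h⊗1+1⊗h, D]=0, then the two ways of reordering the product B_{14}(λ) B_{24}(λ+γh_1) B_{34}(λ+γh_1+γh_2) into B_{34}(λ) B_{24}(λ+γh_3) B_{14}(λ+γh_2+γh_3) using the BD exchange relation give the same result; i.e. the dynamical YB equation for D is the consistency condition of the BD exchange algebra on four spaces. -/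
/-!
Each side of the dynamical Yang–Baxter equation for `D` is a word in `D₁₂`, `D₁₃`, `D₂₃` that
can be pushed through `B₁₄ B₂₄ B₃₄` one letter at a time. A letter `D_{ij}` either meets
`B_{i4} B_{j4}`: these live on three of the four factors, the remaining one is a spectator that
only shifts `λ`, and the `DBB` relation applies blockwise. Or it meets a `B_{k4}` acting on the
complementary factors, and the two commute because the weight conditions make each one's
dynamical shift invisible to the other: `B` preserves `h₁`, while `D` preserves `h_i + h_j`.
-/

open Matrix Kronecker

noncomputable section

variable {n : ℕ}

/-- Fourfold tensor index. -/
abbrev I4 (n : ℕ) : Type := Fin n × Fin n × Fin n × Fin n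

/-- `M₁₂(σ(λ))` on `V^{⊗4}`, with a column-dependent dynamical shift `σ`. -/
def e12 {α : Type} [Zero α] (F : (Fin n → ℂ) → Matrix (Fin n × Fin n) (Fin n × Fin n) α)
    (σ : (Fin n → ℂ) → I4 n → (Fin n → ℂ)) (l : Fin n → ℂ) : Matrix (I4 n) (I4 n) α :=
  Matrix.of fun p q => if p.2.2 = q.2.2 then F (σ l q) (p.1, p.2.1) (q.1, q.2.1) else 0

/-- `M₁₃(σ(λ))` on `V^{⊗4}`. -/
def e13 {α : Type} [Zero α] (F : (Fin n → ℂ) → Matrix (Fin n × Fin n) (Fin n × Fin n) α)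
    (σ : (Fin n → ℂ) → I4 n → (Fin n → ℂ)) (l : Fin n → ℂ) : Matrix (I4 n) (I4 n) α :=
  Matrix.of fun p q => if p.2.1 = q.2.1 ∧ p.2.2.2 = q.2.2.2 then
    F (σ l q) (p.1, p.2.2.1) (q.1, q.2.2.1) else 0

/-- `M₂₃(σ(λ))` on `V^{⊗4}`. -/
def e23 {α : Type} [Zero α] (F : (Fin n → ℂ) → Matrix (Fin n × Fin n) (Fin n × Fin n) α)
    (σ : (Fin n → ℂ) → I4 n → (Fin n → ℂ)) (l : Fin n → ℂ) : Matrix (I4 n) (I4 n) α :=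
  Matrix.of fun p q => if p.1 = q.1 ∧ p.2.2.2 = q.2.2.2 then
    F (σ l q) (p.2.1, p.2.2.1) (q.2.1, q.2.2.1) else 0

/-- `M₁₄(σ(λ))` on `V^{⊗4}`. -/
def e14 {α : Type} [Zero α] (F : (Fin n → ℂ) → Matrix (Fin n × Fin n) (Fin n × Fin n) α)
    (σ : (Fin n → ℂ) → I4 n → (Fin n → ℂ)) (l : Fin n → ℂ) : Matrix (I4 n) (I4 n) α :=
  Matrix.of fun p q => if p.2.1 = q.2.1 ∧ p.2.2.1 = q.2.2.1 then
    F (σ l q) (p.1, p.2.2.2) (q.1, q.2.2.2) else 0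

/-- `M₂₄(σ(λ))` on `V^{⊗4}`. -/
def e24 {α : Type} [Zero α] (F : (Fin n → ℂ) → Matrix (Fin n × Fin n) (Fin n × Fin n) α)
    (σ : (Fin n → ℂ) → I4 n → (Fin n → ℂ)) (l : Fin n → ℂ) : Matrix (I4 n) (I4 n) α :=
  Matrix.of fun p q => if p.1 = q.1 ∧ p.2.2.1 = q.2.2.1 then
    F (σ l q) (p.2.1, p.2.2.2) (q.2.1, q.2.2.2) else 0

/-- `M₃₄(σ(λ))` on `V^{⊗4}`. -/
def e34 {α : Type} [Zero α] (F : (Fin n → ℂ) → Matrix (Fin n × Fin n) (Fin n × Fin n) α)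
    (σ : (Fin n → ℂ) → I4 n → (Fin n → ℂ)) (l : Fin n → ℂ) : Matrix (I4 n) (I4 n) α :=
  Matrix.of fun p q => if p.1 = q.1 ∧ p.2.1 = q.2.1 then
    F (σ l q) (p.2.2.1, p.2.2.2) (q.2.2.1, q.2.2.2) else 0

/-- no dynamical shift. -/
def σ0 {n : ℕ} : (Fin n → ℂ) → I4 n → (Fin n → ℂ) := fun l _ => l
/-- shift by `γ h₁`. -/
def σ1 (γ : ℂ) : (Fin n → ℂ) → I4 n → (Fin n → ℂ) := fun l q => lsh γ l q.1
/-- shift by `γ h₂`. -/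
def σ2 (γ : ℂ) : (Fin n → ℂ) → I4 n → (Fin n → ℂ) := fun l q => lsh γ l q.2.1
/-- shift by `γ h₃`. -/
def σ3 (γ : ℂ) : (Fin n → ℂ) → I4 n → (Fin n → ℂ) := fun l q => lsh γ l q.2.2.1
/-- shift by `γ h₁ + γ h₂`. -/
def σ12 (γ : ℂ) : (Fin n → ℂ) → I4 n → (Fin n → ℂ) := fun l q => lsh γ (lsh γ l q.1) q.2.1
/-- shift by `γ h₂ + γ h₃`. -/
def σ23 (γ : ℂ) : (Fin n → ℂ) → I4 n → (Fin n → ℂ) :=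
  fun l q => lsh γ (lsh γ l q.2.1) q.2.2.1

namespace Matrix

variable {m R : Type*} [DecidableEq m]

theorem diagonal_kronecker_one [MulZeroOneClass R] (d : m → R) :
    diagonal d ⊗ₖ (1 : Matrix m m R) = diagonal fun i => d i.1 := by
  rw [← diagonal_one, diagonal_kronecker_diagonal]
  simp only [mul_one]

theorem one_kronecker_diagonal [MulZeroOneClass R] (d : m → R) :
    (1 : Matrix m m R) ⊗ₖ diagonal d = diagonal fun i => d i.2 := by
  rw [← diagonal_one, diagonal_kronecker_diagonal]
  simp only [one_mul]

theorem apply_eq_zero_of_commute_diagonal_kronecker_one [Fintype m] [Semiring R]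
    {M : Matrix (m × m) (m × m) R}
    (hM : ∀ d : m → R, (diagonal d ⊗ₖ (1 : Matrix m m R)) * M = M * (diagonal d ⊗ₖ 1))
    {p q : m × m} (hpq : p.1 ≠ q.1) : M p q = 0 := by
  have h := congrFun₂ (hM (Pi.single p.1 1)) p q
  simpa [diagonal_kronecker_one, Pi.single_apply, hpq.symm] using h

theorem weight_eq_of_apply_ne_zero [Fintype m] [CommRing R] [NoZeroDivisors R]
    {M : Matrix (m × m) (m × m) R}
    (hM : ∀ d : m → R, (diagonal d ⊗ₖ (1 : Matrix m m R) + 1 ⊗ₖ diagonal d) * M =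
      M * (diagonal d ⊗ₖ 1 + 1 ⊗ₖ diagonal d))
    {p q : m × m} (hpq : M p q ≠ 0) (d : m → R) : d p.1 + d p.2 = d q.1 + d q.2 := by
  have h := congrFun₂ (hM d) p q
  rw [diagonal_kronecker_one, one_kronecker_diagonal, diagonal_add, diagonal_mul,
    mul_diagonal, mul_comm] at h
  exact mul_left_cancel₀ hpq h

end Matrix

theorem lsh_comm {S : Type} [AddCommMonoid S] (g : S) (l : Fin n → S) (a b : Fin n) :
    lsh g (lsh g l a) b = lsh g (lsh g l b) a := by
  funext m
  simp only [lsh, add_assoc, add_comm (if m = a then g else 0)]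

theorem lsh_lsh_eq_of_weight_eq {S : Type} [AddCommMonoid S] (g : S) (l : Fin n → S)
    {a b a' b' : Fin n} (h : ∀ d : Fin n → S, d a + d b = d a' + d b') :
    lsh g (lsh g l a) b = lsh g (lsh g l a') b' := by
  funext m
  simp only [lsh, add_assoc]
  exact congrArg (l m + ·) (h fun j => if m = j then g else 0)

def σ13 (γ : ℂ) : (Fin n → ℂ) → I4 n → (Fin n → ℂ) := fun l q => lsh γ (lsh γ l q.1) q.2.2.1

section Commute

variable {γ : ℂ} {B D : (Fin n → ℂ) → Matrix (Fin n × Fin n) (Fin n × Fin n) ℂ} {l : Fin n → ℂ}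

section WeightB

variable (hwB : ∀ d : Fin n → ℂ,
  (diagonal d ⊗ₖ (1 : Matrix (Fin n) (Fin n) ℂ)) * B l = B l * (diagonal d ⊗ₖ 1))
include hwB

theorem commute_e13_σ2_e24 : Commute (e13 D (σ2 γ) l) (e24 B σ0 l) := by
  ext ⟨p1, p2, p3, p4⟩ ⟨q1, q2, q3, q4⟩
  simp only [e13, σ2, e24, σ0, ite_and, mul_apply, of_apply, mul_ite, ite_mul, zero_mul, mul_zero,
    Fintype.sum_prod_type, Finset.sum_ite_irrel, Finset.sum_ite_eq, Finset.mem_univ, ↓reduceIte,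
    Finset.sum_const_zero, Finset.sum_ite_eq']
  by_cases h : p2 = q2
  · subst h
    simp only [mul_comm]
  · simp [apply_eq_zero_of_commute_diagonal_kronecker_one hwB (p := (p2, p4)) (q := (q2, q4)) h]

theorem commute_e23_σ1_e14 : Commute (e23 D (σ1 γ) l) (e14 B σ0 l) := by
  ext ⟨p1, p2, p3, p4⟩ ⟨q1, q2, q3, q4⟩
  simp only [e23, σ1, e14, σ0, ite_and, mul_apply, of_apply, mul_ite, ite_mul, zero_mul, mul_zero,
    Fintype.sum_prod_type, Finset.sum_ite_irrel, Finset.sum_ite_eq, Finset.mem_univ, ↓reduceIte,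
    Finset.sum_const_zero, Finset.sum_ite_eq']
  by_cases h : p1 = q1
  · subst h
    simp only [mul_comm]
  · simp [apply_eq_zero_of_commute_diagonal_kronecker_one hwB (p := (p1, p4)) (q := (q1, q4)) h]

theorem commute_e12_σ3_e34 : Commute (e12 D (σ3 γ) l) (e34 B σ0 l) := by
  ext ⟨p1, p2, p3, p4⟩ ⟨q1, q2, q3, q4⟩
  simp only [e12, σ3, e34, σ0, ite_and, mul_apply, of_apply, mul_ite, ite_mul, zero_mul, mul_zero,
    Fintype.sum_prod_type, Finset.sum_ite_irrel, Finset.sum_ite_eq, Finset.mem_univ, ↓reduceIte,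
    Finset.sum_const_zero, Finset.sum_ite_eq']
  by_cases h : p3 = q3
  · subst h
    simp only [mul_comm]
  · simp [apply_eq_zero_of_commute_diagonal_kronecker_one hwB (p := (p3, p4)) (q := (q3, q4)) h]

end WeightB

section WeightD

variable (hwD : ∀ d : Fin n → ℂ,
  (diagonal d ⊗ₖ (1 : Matrix (Fin n) (Fin n) ℂ) + 1 ⊗ₖ diagonal d) * D l =
    D l * (diagonal d ⊗ₖ 1 + 1 ⊗ₖ diagonal d))
include hwD

theorem commute_e12_e34_σ12 : Commute (e12 D σ0 l) (e34 B (σ12 γ) l) := by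
  ext ⟨p1, p2, p3, p4⟩ ⟨q1, q2, q3, q4⟩
  simp only [e12, σ0, e34, σ12, ite_and, mul_apply, of_apply, mul_ite, ite_mul, zero_mul, mul_zero,
    Fintype.sum_prod_type, Finset.sum_ite_irrel, Finset.sum_ite_eq, Finset.mem_univ, ↓reduceIte,
    Finset.sum_const_zero, Finset.sum_ite_eq']
  by_cases hD : D l (p1, p2) (q1, q2) = 0
  · simp [hD]
  · rw [lsh_lsh_eq_of_weight_eq γ l (weight_eq_of_apply_ne_zero hwD hD)]
    exact mul_comm _ _

theorem commute_e23_e14_σ23 : Commute (e23 D σ0 l) (e14 B (σ23 γ) l) := by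
  ext ⟨p1, p2, p3, p4⟩ ⟨q1, q2, q3, q4⟩
  simp only [e23, σ0, e14, σ23, ite_and, mul_apply, of_apply, mul_ite, ite_mul, zero_mul, mul_zero,
    Fintype.sum_prod_type, Finset.sum_ite_irrel, Finset.sum_ite_eq, Finset.mem_univ, ↓reduceIte,
    Finset.sum_const_zero, Finset.sum_ite_eq']
  by_cases hD : D l (p2, p3) (q2, q3) = 0
  · simp [hD]
  · rw [lsh_lsh_eq_of_weight_eq γ l (weight_eq_of_apply_ne_zero hwD hD)]
    exact mul_comm _ _

theorem commute_e13_e24_σ13 : Commute (e13 D σ0 l) (e24 B (σ13 γ) l) := by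
  ext ⟨p1, p2, p3, p4⟩ ⟨q1, q2, q3, q4⟩
  simp only [e13, σ0, e24, σ13, ite_and, mul_apply, of_apply, mul_ite, ite_mul, zero_mul, mul_zero,
    Fintype.sum_prod_type, Finset.sum_ite_irrel, Finset.sum_ite_eq, Finset.mem_univ, ↓reduceIte,
    Finset.sum_const_zero, Finset.sum_ite_eq']
  by_cases hD : D l (p1, p3) (q1, q3) = 0
  · simp [hD]
  · rw [lsh_lsh_eq_of_weight_eq γ l (weight_eq_of_apply_ne_zero hwD hD)]
    exact mul_comm _ _

end WeightD

end Commute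

abbrev I3 (n : ℕ) : Type := Fin n × Fin n × Fin n

-- `(blockDiagonal M).submatrix extractSlotₖ extractSlotₖ` acts on the other three factors, in
-- order, by `M j` wherever slot `k` carries `e_j`.
def extractSlot₁ : I4 n ≃ I3 n × Fin n where
  toFun p := ((p.2.1, p.2.2.1, p.2.2.2), p.1)
  invFun x := (x.2, x.1.1, x.1.2.1, x.1.2.2)
  left_inv _ := rfl
  right_inv _ := rfl

def extractSlot₂ : I4 n ≃ I3 n × Fin n where
  toFun p := ((p.1, p.2.2.1, p.2.2.2), p.2.1)
  invFun x := (x.1.1, x.2, x.1.2.1, x.1.2.2)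
  left_inv _ := rfl
  right_inv _ := rfl

def extractSlot₃ : I4 n ≃ I3 n × Fin n where
  toFun p := ((p.1, p.2.1, p.2.2.2), p.2.2.1)
  invFun x := (x.1.1, x.1.2.1, x.2, x.1.2.2)
  left_inv _ := rfl
  right_inv _ := rfl

section Exchange

variable {γ : ℂ} {B D : (Fin n → ℂ) → Matrix (Fin n × Fin n) (Fin n × Fin n) ℂ}
  (hDB : ∀ l, op12 (D l) * op13 (B l) * op23sh1 γ B l =
    op23 (B l) * op13sh2 γ B l * op12 (D l))
  -- `μ k` is the value of `λ` on the block where the spectator slot carries `e_k`.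
  (μ : Fin n → Fin n → ℂ) {σ τ ρ : (Fin n → ℂ) → I4 n → (Fin n → ℂ)} {l : Fin n → ℂ}
include hDB

theorem exchange_e23_e24_e34 (hσ : ∀ q, σ l q = μ q.1)
    (hτ : ∀ q, τ l q = lsh γ (μ q.1) q.2.1) (hρ : ∀ q, ρ l q = lsh γ (μ q.1) q.2.2.1) :
    e23 D σ l * e24 B σ l * e34 B τ l = e34 B σ l * e24 B ρ l * e23 D σ l := by
  have h := congrArg (fun M => (blockDiagonal M).submatrix extractSlot₁ extractSlot₁)
    (funext fun k => hDB (μ k))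
  simp only [blockDiagonal_mul, ← submatrix_mul_equiv _ _ _ extractSlot₁ _] at h
  -- it remains to identify each factor with its block-diagonal counterpart, entrywise
  convert h using 2 <;> try congr 1
  all_goals
    ext ⟨p1, p2, p3, p4⟩ ⟨q1, q2, q3, q4⟩
    simp only [e23, e24, e34, op12, op13, op23, op23sh1, op13sh2, blockDiagonal_apply,
      submatrix_apply, extractSlot₁, Equiv.coe_fn_mk, of_apply, hσ, hτ, hρ, ite_and]
    split_ifs <;> simp_all

theorem exchange_e13_e14_e34 (hσ : ∀ q, σ l q = μ q.2.1)
    (hτ : ∀ q, τ l q = lsh γ (μ q.2.1) q.1) (hρ : ∀ q, ρ l q = lsh γ (μ q.2.1) q.2.2.1) :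
    e13 D σ l * e14 B σ l * e34 B τ l = e34 B σ l * e14 B ρ l * e13 D σ l := by
  have h := congrArg (fun M => (blockDiagonal M).submatrix extractSlot₂ extractSlot₂)
    (funext fun k => hDB (μ k))
  simp only [blockDiagonal_mul, ← submatrix_mul_equiv _ _ _ extractSlot₂ _] at h
  convert h using 2 <;> try congr 1
  all_goals
    ext ⟨p1, p2, p3, p4⟩ ⟨q1, q2, q3, q4⟩
    simp only [e13, e14, e34, op12, op13, op23, op23sh1, op13sh2, blockDiagonal_apply,
      submatrix_apply, extractSlot₂, Equiv.coe_fn_mk, of_apply, hσ, hτ, hρ, ite_and]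
    split_ifs <;> simp_all

theorem exchange_e12_e14_e24 (hσ : ∀ q, σ l q = μ q.2.2.1)
    (hτ : ∀ q, τ l q = lsh γ (μ q.2.2.1) q.1) (hρ : ∀ q, ρ l q = lsh γ (μ q.2.2.1) q.2.1) :
    e12 D σ l * e14 B σ l * e24 B τ l = e24 B σ l * e14 B ρ l * e12 D σ l := by
  have h := congrArg (fun M => (blockDiagonal M).submatrix extractSlot₃ extractSlot₃)
    (funext fun k => hDB (μ k))
  simp only [blockDiagonal_mul, ← submatrix_mul_equiv _ _ _ extractSlot₃ _] at h
  convert h using 2 <;> try congr 1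
  all_goals
    ext ⟨p1, p2, p3, p4⟩ ⟨q1, q2, q3, q4⟩
    simp only [e12, e14, e24, op12, op13, op23, op23sh1, op13sh2, blockDiagonal_apply,
      submatrix_apply, extractSlot₃, Equiv.coe_fn_mk, of_apply, hσ, hτ, hρ, Prod.mk.injEq, ite_and]
    split_ifs <;> simp_all

end Exchange

section Reorder

variable {M : Type*} [Monoid M] {x y z a b c a₂ a₃ a₂₃ b₀ b₃ b₁₃ c₀ c₁ c₂ : M}

theorem reorder_of_exchanges_rhs (hzab : z * a * b = b₀ * a₂ * z) (hzc : Commute z c)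
    (hyb : Commute y b₀) (hyac : y * a₂ * c = c₂ * a₂₃ * y)
    (hxbc : x * b₀ * c₂ = c₀ * b₃ * x) (hxa : Commute x a₂₃) :
    x * y * z * (a * b * c) = c₀ * b₃ * a₂₃ * (x * y * z) :=
  calc x * y * z * (a * b * c)
      = x * y * (z * a * b) * c := by simp only [mul_assoc]
    _ = x * (y * b₀) * a₂ * (z * c) := by rw [hzab]; simp only [mul_assoc]
    _ = x * b₀ * (y * a₂ * c) * z := by rw [hyb.eq, hzc.eq]; simp only [mul_assoc]
    _ = x * b₀ * c₂ * (a₂₃ * y) * z := by rw [hyac]; simp only [mul_assoc]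
    _ = c₀ * b₃ * (x * a₂₃) * y * z := by rw [hxbc]; simp only [mul_assoc]
    _ = c₀ * b₃ * a₂₃ * (x * y * z) := by rw [hxa.eq]; simp only [mul_assoc]

theorem reorder_of_exchanges_lhs (hza : Commute z a) (hzbc : z * b * c = c₁ * b₁₃ * z)
    (hyac : y * a * c₁ = c₀ * a₃ * y) (hyb : Commute y b₁₃)
    (hxc : Commute x c₀) (hxab : x * a₃ * b₁₃ = b₃ * a₂₃ * x) :
    x * y * z * (a * b * c) = c₀ * b₃ * a₂₃ * (x * y * z) :=
  calc x * y * z * (a * b * c)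
      = x * y * (z * a) * b * c := by simp only [mul_assoc]
    _ = x * y * a * (z * b * c) := by rw [hza.eq]; simp only [mul_assoc]
    _ = x * (y * a * c₁) * b₁₃ * z := by rw [hzbc]; simp only [mul_assoc]
    _ = x * c₀ * a₃ * (y * b₁₃) * z := by rw [hyac]; simp only [mul_assoc]
    _ = c₀ * (x * a₃ * b₁₃) * y * z := by rw [hyb.eq, hxc.eq]; simp only [mul_assoc]
    _ = c₀ * b₃ * a₂₃ * (x * y * z) := by rw [hxab]; simp only [mul_assoc]

end Reorder

theorem statement12_general (n : ℕ) (γ : ℂ)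
    (B D : (Fin n → ℂ) → Matrix (Fin n × Fin n) (Fin n × Fin n) ℂ)
    (hDB : ∀ l, op12 (D l) * op13 (B l) * op23sh1 γ B l =
      op23 (B l) * op13sh2 γ B l * op12 (D l))
    (hwB : ∀ l (d : Fin n → ℂ),
      (diagonal d ⊗ₖ (1 : Matrix (Fin n) (Fin n) ℂ)) * B l =
        B l * (diagonal d ⊗ₖ (1 : Matrix (Fin n) (Fin n) ℂ)))
    (hwD : ∀ l (d : Fin n → ℂ),
      (diagonal d ⊗ₖ (1 : Matrix (Fin n) (Fin n) ℂ) +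
          (1 : Matrix (Fin n) (Fin n) ℂ) ⊗ₖ diagonal d) * D l =
        D l * (diagonal d ⊗ₖ (1 : Matrix (Fin n) (Fin n) ℂ) +
          (1 : Matrix (Fin n) (Fin n) ℂ) ⊗ₖ diagonal d)) :
    ∀ l,
      (e23 D σ0 l * e13 D (σ2 γ) l * e12 D σ0 l) *
          (e14 B σ0 l * e24 B (σ1 γ) l * e34 B (σ12 γ) l) =
        (e34 B σ0 l * e24 B (σ3 γ) l * e14 B (σ23 γ) l) *
          (e23 D σ0 l * e13 D (σ2 γ) l * e12 D σ0 l) ∧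
      (e12 D (σ3 γ) l * e13 D σ0 l * e23 D (σ1 γ) l) *
          (e14 B σ0 l * e24 B (σ1 γ) l * e34 B (σ12 γ) l) =
        (e34 B σ0 l * e24 B (σ3 γ) l * e14 B (σ23 γ) l) *
          (e12 D (σ3 γ) l * e13 D σ0 l * e23 D (σ1 γ) l) := by
  intro l
  have hlsh : ∀ a b, lsh γ (lsh γ l a) b = lsh γ (lsh γ l b) a := lsh_comm γ l
  constructor
  · exact reorder_of_exchanges_rhs
      (exchange_e12_e14_e24 hDB (fun _ => l) (ρ := σ2 γ) (fun _ => rfl) (fun _ => rfl)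
        (fun _ => rfl))
      (commute_e12_e34_σ12 (hwD l))
      (commute_e13_σ2_e24 (hwB l))
      (exchange_e13_e14_e34 hDB (lsh γ l) (fun _ => rfl) (fun _ => hlsh _ _) (fun _ => rfl))
      (exchange_e23_e24_e34 hDB (fun _ => l) (ρ := σ3 γ) (fun _ => rfl) (fun _ => rfl)
        (fun _ => rfl))
      (commute_e23_e14_σ23 (hwD l))
  · exact reorder_of_exchanges_lhs
      (commute_e23_σ1_e14 (hwB l))
      (exchange_e23_e24_e34 hDB (lsh γ l) (ρ := σ13 γ) (fun _ => rfl) (fun _ => rfl)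
        (fun _ => rfl))
      (exchange_e13_e14_e34 hDB (fun _ => l) (fun _ => rfl) (fun _ => rfl) (fun _ => rfl))
      (commute_e13_e24_σ13 (hwD l))
      (commute_e12_σ3_e34 (hwB l))
      (exchange_e12_e14_e24 hDB (lsh γ l) (fun _ => rfl) (fun _ => hlsh _ _) (fun _ => hlsh _ _))

/-- if `B`, `D` satisfy the mixed `DBB` exchange relation and `D`
satisfies the dynamical YB equation, with `B` of zero weight in its first space
and `D` of total zero weight, then the two ways of reordering
`B₁₄(λ) B₂₄(λ+γh₁) B₃₄(λ+γh₁+γh₂)` into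
`B₃₄(λ) B₂₄(λ+γh₃) B₁₄(λ+γh₂+γh₃)` by means of the `BD` exchange relation give
the same result: each of the two `D`-words (the two sides of the dynamical YB
equation for `D`) intertwines the two ordered `B`-products. -/
theorem statement12 (n : ℕ) (γ : ℂ)
    (B D : (Fin n → ℂ) → Matrix (Fin n × Fin n) (Fin n × Fin n) ℂ)
    (hDB : ∀ l, op12 (D l) * op13 (B l) * op23sh1 γ B l =
      op23 (B l) * op13sh2 γ B l * op12 (D l))
    (hDYB : ∀ l, op12sh3 γ D l * op13 (D l) * op23sh1 γ D l =
      op23 (D l) * op13sh2 γ D l * op12 (D l))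
    (hwB : ∀ l (d : Fin n → ℂ),
      (diagonal d ⊗ₖ (1 : Matrix (Fin n) (Fin n) ℂ)) * B l =
        B l * (diagonal d ⊗ₖ (1 : Matrix (Fin n) (Fin n) ℂ)))
    (hwD : ∀ l (d : Fin n → ℂ),
      (diagonal d ⊗ₖ (1 : Matrix (Fin n) (Fin n) ℂ) +
          (1 : Matrix (Fin n) (Fin n) ℂ) ⊗ₖ diagonal d) * D l =
        D l * (diagonal d ⊗ₖ (1 : Matrix (Fin n) (Fin n) ℂ) +
          (1 : Matrix (Fin n) (Fin n) ℂ) ⊗ₖ diagonal d)) :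
    ∀ l,
      (e23 D σ0 l * e13 D (σ2 γ) l * e12 D σ0 l) *
          (e14 B σ0 l * e24 B (σ1 γ) l * e34 B (σ12 γ) l) =
        (e34 B σ0 l * e24 B (σ3 γ) l * e14 B (σ23 γ) l) *
          (e23 D σ0 l * e13 D (σ2 γ) l * e12 D σ0 l) ∧
      (e12 D (σ3 γ) l * e13 D σ0 l * e23 D (σ1 γ) l) *
          (e14 B σ0 l * e24 B (σ1 γ) l * e34 B (σ12 γ) l) =
        (e34 B σ0 l * e24 B (σ3 γ) l * e14 B (σ23 γ) l) *
          (e12 D (σ3 γ) l * e13 D σ0 l * e23 D (σ1 γ) l) :=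
  statement12_general n γ B D hDB hwB hwD
end
end
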